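/- Let f : ℝⁿ → ℝ be three times continuously differentiable, μ-strongly convex, with L-Lipschitz gradient, and M-self-concordant. For x, d ∈ ℝⁿ with d ≠ 0, define tˡ := (1/(M‖d‖ₓ))(‖d‖ₓ/(√μ‖d‖) − 1) and tᵘ := (1/(M‖d‖ₓ))(1 − ‖d‖ₓ/(√L‖d‖)). Then for all t ≥ 0: (i) ∇f(x+td)ᵀd ≥ ∇f(x)ᵀd + t‖d‖ₓ²/(1+Mt‖d‖ₓ) if 0 ≤ t ≤ tˡ, and ∇f(x+td)ᵀd ≥ ∇f(x)ᵀd + tˡ‖d‖ₓ²/(1+Mtˡ‖d‖ₓ) + μ(t−tˡ)‖d‖² if t > tˡ; (ii) ∇f(x+td)ᵀd ≤ ∇f(x)ᵀd + t‖d‖ₓ²/(1−Mt‖d‖ₓ) if 0 ≤ t ≤ tᵘ, and ∇f(x+td)ᵀd ≤ ∇f(x)ᵀd + tᵘ‖d‖ₓ²/(1−Mtᵘ‖d‖ₓ) + L(t−tᵘ)‖d‖² if t > tᵘ; (iii) f(x+td) ≤ f(x) + t∇f(x)ᵀd + ω*(Mt‖d‖ₓ)/M² if 0 ≤ t ≤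 tᵘ, and f(x+td) ≤ f(x) + t∇f(x)ᵀd + ω*(Mtᵘ‖d‖ₓ)/M² + tᵘ(t−tᵘ)‖d‖ₓ²/(1−Mtᵘ‖d‖ₓ) + (L/2)(t−tᵘ)²‖d‖² if t > tᵘ. -/

import Mathlib

noncomputable section

open scoped BigOperators Classical

/-- Vectors in `ℝⁿ` with the Euclidean norm. -/
abbrev V (n : ℕ) := EuclideanSpace ℝ (Fin n)

/-- The Euclidean dot product `uᵀv`. -/
def dot {n : ℕ} (u v : V n) : ℝ := ∑ i, u i * v i

/-- The Hessian quadratic form `dᵀ∇²f(x)d`. -/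
def hessQ {n : ℕ} (f : V n → ℝ) (x d : V n) : ℝ := iteratedFDeriv ℝ 2 f x ![d, d]

/-- The weighted norm `‖d‖ₓ = (dᵀ∇²f(x)d)^{1/2}`. -/
def wnorm {n : ℕ} (f : V n → ℝ) (x d : V n) : ℝ := Real.sqrt (hessQ f x d)

/-- `f` is `μ`-strongly convex. -/
def StrongConvex {n : ℕ} (μ : ℝ) (f : V n → ℝ) : Prop :=
  ∀ x y : V n, ∀ l : ℝ, 0 ≤ l → l ≤ 1 →
    f (l • x + (1 - l) • y) ≤ l * f x + (1 - l) * f y - l * (1 - l) * μ / 2 * ‖x - y‖ ^ 2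

/-- `f` has `L`-Lipschitz continuous gradient. -/
def LipschitzGrad {n : ℕ} (L : ℝ) (f : V n → ℝ) : Prop :=
  ∀ x y : V n, ‖gradient f x - gradient f y‖ ≤ L * ‖x - y‖

/-- `f` is `M`-self-concordant: `|D³f(x)[d,d,d]| ≤ 2M (dᵀ∇²f(x)d)^{3/2}`. -/
def SelfConcordant {n : ℕ} (M : ℝ) (f : V n → ℝ) : Prop :=
  ∀ x d : V n, |iteratedFDeriv ℝ 3 f x ![d, d, d]| ≤ 2 * M * hessQ f x d ^ ((3 : ℝ) / 2)

/-- `f` has `L₂`-Lipschitz continuous Hessian. -/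
def LipschitzHessian {n : ℕ} (L₂ : ℝ) (f : V n → ℝ) : Prop :=
  ∀ x y : V n, ‖iteratedFDeriv ℝ 2 f x - iteratedFDeriv ℝ 2 f y‖ ≤ L₂ * ‖x - y‖

/-- `ω(z) = z - ln(1+z)`. -/
def omegaFn (z : ℝ) : ℝ := z - Real.log (1 + z)

/-- `ω⋆(z) = -z - ln(1-z)`. -/
def omegaStar (z : ℝ) : ℝ := -z - Real.log (1 - z)

/-- Matrix–vector multiplication acting on Euclidean space. -/
def mulv {n : ℕ} (A : Matrix (Fin n) (Fin n) ℝ) (v : V n) : V n :=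
  (EuclideanSpace.equiv (Fin n) ℝ).symm (A.mulVec (EuclideanSpace.equiv (Fin n) ℝ v))

/-- `g_k = ∇f(x_k)`. -/
def gvec {n : ℕ} (f : V n → ℝ) (x : ℕ → V n) (k : ℕ) : V n := gradient f (x k)

/-- `d_k = -B_k⁻¹ g_k`. -/
def dvec {n : ℕ} (f : V n → ℝ) (x : ℕ → V n) (B : ℕ → Matrix (Fin n) (Fin n) ℝ) (k : ℕ) : V n :=
  -(mulv (B k)⁻¹ (gvec f x k))

/-- `η_k = -g_kᵀd_k / ‖d_k‖_{x_k}`. -/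
def etaSeq {n : ℕ} (f : V n → ℝ) (x : ℕ → V n) (B : ℕ → Matrix (Fin n) (Fin n) ℝ) (k : ℕ) : ℝ :=
  -(dot (gvec f x k) (dvec f x B k)) / wnorm f (x k) (dvec f x B k)

/-- The adaptive step size `t_k = η_k / ((1 + M η_k) ‖d_k‖_{x_k})`. -/
def tSeq {n : ℕ} (f : V n → ℝ) (M : ℝ) (x : ℕ → V n) (B : ℕ → Matrix (Fin n) (Fin n) ℝ)
    (k : ℕ) : ℝ :=
  etaSeq f x B k / ((1 + M * etaSeq f x B k) * wnorm f (x k) (dvec f x B k))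

/-- `s_k = x_{k+1} - x_k`. -/
def svec {n : ℕ} (x : ℕ → V n) (k : ℕ) : V n := x (k + 1) - x k

/-- `y_k = g_{k+1} - g_k`. -/
def yvec {n : ℕ} (f : V n → ℝ) (x : ℕ → V n) (k : ℕ) : V n := gvec f x (k + 1) - gvec f x k

/-- The outer product `u vᵀ`. -/
def outer {n : ℕ} (u v : V n) : Matrix (Fin n) (Fin n) ℝ := Matrix.of fun i j => u i * v j

/-- The adaptive BFGS method (Algorithm 1). -/
structure AdaptiveBFGS {n : ℕ} (f : V n → ℝ) (M : ℝ) (x : ℕ → V n)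
    (B : ℕ → Matrix (Fin n) (Fin n) ℝ) : Prop where
  posdef : (B 0).PosDef
  step : ∀ k, x (k + 1) = x k + tSeq f M x B k • dvec f x B k
  update : ∀ k, B (k + 1) =
    B k - (dot (svec x k) (mulv (B k) (svec x k)))⁻¹ • (B k * outer (svec x k) (svec x k) * B k)
      + (dot (yvec f x k) (svec x k))⁻¹ • outer (yvec f x k) (yvec f x k)

/-- `α_k = ‖d_k‖_{x_k} / (√L ‖d_k‖)`. -/
def alphaSeq {n : ℕ} (f : V n → ℝ) (L : ℝ) (x : ℕ → V n) (B : ℕ → Matrix (Fin n) (Fin n) ℝ)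
    (k : ℕ) : ℝ :=
  wnorm f (x k) (dvec f x B k) / (Real.sqrt L * ‖dvec f x B k‖)

/-- The smoothness aided adaptive step size `t̃_k`. -/
def ttSeq {n : ℕ} (f : V n → ℝ) (M L : ℝ) (x : ℕ → V n) (B : ℕ → Matrix (Fin n) (Fin n) ℝ)
    (k : ℕ) : ℝ :=
  if (1 + M * etaSeq f x B k) * alphaSeq f L x B k ≤ 1 then
    etaSeq f x B k / ((1 + M * etaSeq f x B k) * wnorm f (x k) (dvec f x B k))
  else
    (M * etaSeq f x B k * alphaSeq f L x B k ^ 2 + (1 - alphaSeq f L x B k) ^ 2)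
      / (M * wnorm f (x k) (dvec f x B k))

/-- The smoothness aided adaptive BFGS method SA²-BFGS (Algorithm 3). -/
structure SA2BFGS {n : ℕ} (f : V n → ℝ) (M L : ℝ) (x : ℕ → V n)
    (B : ℕ → Matrix (Fin n) (Fin n) ℝ) : Prop where
  posdef : (B 0).PosDef
  step : ∀ k, x (k + 1) = x k + ttSeq f M L x B k • dvec f x B k
  update : ∀ k, B (k + 1) =
    B k - (dot (svec x k) (mulv (B k) (svec x k)))⁻¹ • (B k * outer (svec x k) (svec x k) * B k)
      + (dot (yvec f x k) (svec x k))⁻¹ • outer (yvec f x k) (yvec f x k)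

/-- The positive semidefinite square root of a positive semidefinite matrix
(the definition `Matrix.PosSemidef.sqrt` of the older Mathlib). -/
def posSemidefSqrt {m : Type*} [Fintype m] [DecidableEq m]
    {A : Matrix m m ℝ} (hA : A.PosSemidef) : Matrix m m ℝ :=
  hA.isHermitian.eigenvectorUnitary.1 * Matrix.diagonal ((↑) ∘ (√·) ∘ hA.isHermitian.eigenvalues) *
    (star hA.isHermitian.eigenvectorUnitary : Matrix m m ℝ)

/-- `ĝ_k = P^{-1/2} g_k`. -/
def hatg {n : ℕ} (f : V n → ℝ) (x : ℕ → V n) (P : Matrix (Fin n) (Fin n) ℝ) (hP : P.PosDef)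
    (k : ℕ) : V n :=
  mulv (posSemidefSqrt hP.posSemidef)⁻¹ (gvec f x k)

/-- `ŝ_k = P^{1/2} s_k`. -/
def hats {n : ℕ} (x : ℕ → V n) (P : Matrix (Fin n) (Fin n) ℝ) (hP : P.PosDef) (k : ℕ) : V n :=
  mulv (posSemidefSqrt hP.posSemidef) (svec x k)

/-- `ŷ_k = P^{-1/2} y_k`. -/
def haty {n : ℕ} (f : V n → ℝ) (x : ℕ → V n) (P : Matrix (Fin n) (Fin n) ℝ) (hP : P.PosDef)
    (k : ℕ) : V n :=
  mulv (posSemidefSqrt hP.posSemidef)⁻¹ (yvec f x k)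

/-- `cos θ̂_k = -ĝ_kᵀŝ_k / (‖ĝ_k‖ ‖ŝ_k‖)`. -/
def cosθ {n : ℕ} (f : V n → ℝ) (x : ℕ → V n) (P : Matrix (Fin n) (Fin n) ℝ) (hP : P.PosDef)
    (k : ℕ) : ℝ :=
  -(dot (hatg f x P hP k) (hats x P hP k)) / (‖hatg f x P hP k‖ * ‖hats x P hP k‖)

/-- `m̂_k = ŷ_kᵀŝ_k / ‖ŝ_k‖²`. -/
def mhat {n : ℕ} (f : V n → ℝ) (x : ℕ → V n) (P : Matrix (Fin n) (Fin n) ℝ) (hP : P.PosDef)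
    (k : ℕ) : ℝ :=
  dot (haty f x P hP k) (hats x P hP k) / ‖hats x P hP k‖ ^ 2

/-- `q̂_k = ‖ĝ_k‖² / (f(x_k) - f(x*))`. -/
def qhat {n : ℕ} (f : V n → ℝ) (x : ℕ → V n) (xstar : V n) (P : Matrix (Fin n) (Fin n) ℝ)
    (hP : P.PosDef) (k : ℕ) : ℝ :=
  ‖hatg f x P hP k‖ ^ 2 / (f (x k) - f xstar)

/-- The potential function `Ψ(A) = tr(A) - ln det(A) - n`. -/
def Psi {n : ℕ} (A : Matrix (Fin n) (Fin n) ℝ) : ℝ := A.trace - Real.log A.det - n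

/-- The Hessian matrix `∇²f(x)` in the standard basis. -/
def hessMatrix {n : ℕ} (f : V n → ℝ) (x : V n) : Matrix (Fin n) (Fin n) ℝ :=
  Matrix.of fun i j =>
    iteratedFDeriv ℝ 2 f x ![EuclideanSpace.single i (1 : ℝ), EuclideanSpace.single j (1 : ℝ)]

/-! Restrict `f` to the line `φ s = f (x + s • d)`. Strong convexity and the Lipschitz gradient
give `μ‖d‖² ≤ φ'' ≤ L‖d‖²`, while self-concordance, `|φ'''| ≤ 2M φ''^{3/2}`, says exactly that
`s ↦ φ''(s)^{-1/2}` is `M`-Lipschitz, whence `r²/(1+Msr)² ≤ φ''(s) ≤ r²/(1-Msr)²` with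
`r = ‖d‖ₓ`. Integrating these envelopes once bounds `φ'` and twice bounds `φ`; beyond `tˡ`
(resp. `tᵘ`), where the envelope crosses `μ‖d‖²` (resp. `L‖d‖²`), the constant bounds are
integrated instead. -/

open Set

theorem sub_le_sub_of_hasDerivAt_le {F G F' G' : ℝ → ℝ} {a b : ℝ} (hab : a ≤ b)
    (hF : ∀ s ∈ Icc a b, HasDerivAt F (F' s) s) (hG : ∀ s ∈ Icc a b, HasDerivAt G (G' s) s)
    (h : ∀ s ∈ Icc a b, F' s ≤ G' s) : F b - F a ≤ G b - G a := by
  have hmono : MonotoneOn (fun s => G s - F s) (Icc a b) :=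
    monotoneOn_of_hasDerivWithinAt_nonneg (convex_Icc a b)
      (fun s hs => ((hG s hs).sub (hF s hs)).continuousAt.continuousWithinAt)
      (fun s hs => ((hG s (interior_subset hs)).sub (hF s (interior_subset hs))).hasDerivWithinAt)
      (fun s hs => sub_nonneg.2 (h s (interior_subset hs)))
  have := hmono (left_mem_Icc.2 hab) (right_mem_Icc.2 hab) hab
  simp only at this
  linarith

theorem StrongConvexOn.le_of_hasDerivAt {φ g q : ℝ → ℝ} {m : ℝ}
    (h : StrongConvexOn univ m φ) (hφ : ∀ t, HasDerivAt φ (g t) t)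
    (hg : ∀ t, HasDerivAt g (q t) t) (t : ℝ) : m ≤ q t := by
  have hconv : ConvexOn ℝ univ fun s => φ s - m / 2 * s ^ 2 := by
    simpa only [Real.norm_eq_abs, sq_abs] using strongConvexOn_iff_convex.1 h
  have hderiv : ∀ s, HasDerivAt (fun s => φ s - m / 2 * s ^ 2) (g s - m * s) s := fun s =>
    ((hφ s).sub ((hasDerivAt_pow 2 s).const_mul (m / 2))).congr_deriv (by norm_num; ring)
  have hmono : Monotone fun s => g s - m * s := by
    have hm := hconv.monotoneOn_deriv fun s _ => (hderiv s).differentiableAt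
    rwa [funext fun s => (hderiv s).deriv, monotoneOn_univ] at hm
  have := ((hg t).sub ((hasDerivAt_id t).const_mul m)).nonneg_of_monotone hmono
  simp only [mul_one] at this
  linarith

theorem abs_inv_sqrt_sub_le_of_selfConcordant {q q' : ℝ → ℝ} {M : ℝ}
    (hq : ∀ t, HasDerivAt q (q' t) t) (hpos : ∀ t, 0 < q t)
    (hsc : ∀ t, |q' t| ≤ 2 * M * q t ^ ((3 : ℝ) / 2)) (s t : ℝ) :
    |(√(q t))⁻¹ - (√(q s))⁻¹| ≤ M * |t - s| := by
  have hderiv : ∀ t, HasDerivAt (fun t => (√(q t))⁻¹)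
      (-(q' t / (2 * √(q t))) / √(q t) ^ 2) t := fun t =>
    ((hq t).sqrt (hpos t).ne').inv (Real.sqrt_pos.2 (hpos t)).ne'
  have hbound : ∀ t, ‖-(q' t / (2 * √(q t))) / √(q t) ^ 2‖ ≤ M := fun t => by
    have hS := Real.sqrt_pos.2 (hpos t)
    have h32 : q t ^ ((3 : ℝ) / 2) = √(q t) ^ 3 := by
      rw [Real.sqrt_eq_rpow, ← Real.rpow_natCast, ← Real.rpow_mul (hpos t).le]; norm_num
    rw [Real.norm_eq_abs, abs_div, abs_neg, abs_div, abs_of_pos (by positivity : 0 < 2 * √(q t)),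
      abs_of_pos (by positivity : 0 < √(q t) ^ 2), div_div, div_le_iff₀ (by positivity)]
    have := hsc t
    rw [h32] at this
    linarith
  simpa only [Real.norm_eq_abs] using
    convex_univ.norm_image_sub_le_of_norm_hasDerivWithin_le
      (fun t _ => (hderiv t).hasDerivWithinAt) (fun t _ => hbound t) (mem_univ s) (mem_univ t)

theorem sq_div_one_add_sq_le_of_abs_inv_sqrt_sub_le {q r δ : ℝ} (hq : 0 < q) (hr : 0 < r)
    (h : |(√q)⁻¹ - r⁻¹| ≤ δ) : r ^ 2 / (1 + δ * r) ^ 2 ≤ q := by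
  have hS := Real.sqrt_pos.2 hq
  have hδ : 0 ≤ δ := (abs_nonneg _).trans h
  have key : r - √q = ((√q)⁻¹ - r⁻¹) * (r * √q) := by field_simp
  have hle : r - √q ≤ δ * (r * √q) :=
    key ▸ mul_le_mul_of_nonneg_right (le_of_abs_le h) (by positivity)
  calc r ^ 2 / (1 + δ * r) ^ 2 = (r / (1 + δ * r)) ^ 2 := (div_pow _ _ _).symm
    _ ≤ √q ^ 2 := pow_le_pow_left₀ (by positivity) ((div_le_iff₀ (by positivity)).2 (by linarith)) 2
    _ = q := Real.sq_sqrt hq.le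

theorem le_sq_div_one_sub_sq_of_abs_inv_sqrt_sub_le {q r δ : ℝ} (hq : 0 < q) (hr : 0 < r)
    (h : |(√q)⁻¹ - r⁻¹| ≤ δ) (hδr : δ * r < 1) : q ≤ r ^ 2 / (1 - δ * r) ^ 2 := by
  have hS := Real.sqrt_pos.2 hq
  have key : √q - r = (r⁻¹ - (√q)⁻¹) * (r * √q) := by field_simp
  have hle : √q - r ≤ δ * (r * √q) :=
    key ▸ mul_le_mul_of_nonneg_right (by linarith [neg_abs_le ((√q)⁻¹ - r⁻¹)]) (by positivity)
  calc q = √q ^ 2 := (Real.sq_sqrt hq.le).symm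
    _ ≤ (r / (1 - δ * r)) ^ 2 :=
      pow_le_pow_left₀ hS.le ((le_div_iff₀ (by linarith)).2 (by linarith)) 2
    _ = r ^ 2 / (1 - δ * r) ^ 2 := div_pow _ _ _

theorem hasDerivAt_mul_sq_div_one_add (M r s : ℝ) (h : 1 + M * s * r ≠ 0) :
    HasDerivAt (fun s => s * r ^ 2 / (1 + M * s * r)) (r ^ 2 / (1 + M * s * r) ^ 2) s := by
  have hden : HasDerivAt (fun s => 1 + M * s * r) (M * r) s := by
    simpa using (((hasDerivAt_id s).const_mul M).mul_const r).const_add 1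
  refine (((hasDerivAt_id s).mul_const (r ^ 2)).div hden h).congr_deriv ?_
  simp only [id, one_mul]
  ring

theorem hasDerivAt_mul_sq_div_one_sub (M r s : ℝ) (h : 1 - M * s * r ≠ 0) :
    HasDerivAt (fun s => s * r ^ 2 / (1 - M * s * r)) (r ^ 2 / (1 - M * s * r) ^ 2) s := by
  simpa only [neg_mul, ← sub_eq_add_neg] using
    hasDerivAt_mul_sq_div_one_add (-M) r s (by rwa [neg_mul, neg_mul, ← sub_eq_add_neg])

theorem hasDerivAt_omegaStar {z : ℝ} (hz : z < 1) : HasDerivAt omegaStar (z / (1 - z)) z := by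
  have h1 : (1 - z) ≠ 0 := by linarith
  refine ((hasDerivAt_neg z).sub (((hasDerivAt_id z).const_sub 1).log h1)).congr_deriv ?_
  simp only [id]
  field_simp
  ring

theorem hasDerivAt_omegaStar_mul_div_sq {M r s : ℝ} (hM : M ≠ 0) (h : M * s * r < 1) :
    HasDerivAt (fun s => omegaStar (M * s * r) / M ^ 2) (s * r ^ 2 / (1 - M * s * r)) s := by
  have hlin : HasDerivAt (fun s => M * s * r) (M * r) s := by
    simpa using ((hasDerivAt_id s).const_mul M).mul_const r
  refine (((hasDerivAt_omegaStar h).comp s hlin).div_const (M ^ 2)).congr_deriv ?_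
  have : 1 - M * s * r ≠ 0 := by linarith
  field_simp

section IntegratedBounds

variable {φ g q : ℝ → ℝ} {C M r a t : ℝ}

theorem image_le_add_mul_sub_of_hasDerivAt_le (hg : ∀ s, HasDerivAt g (q s) s)
    (hq : ∀ s, q s ≤ C) (hat : a ≤ t) : g t ≤ g a + C * (t - a) := by
  have := image_sub_le_mul_sub_of_deriv_le (fun s => (hg s).differentiableAt)
    (fun s => (hg s).deriv ▸ hq s) hat
  linarith

theorem add_mul_sub_le_image_of_le_hasDerivAt (hg : ∀ s, HasDerivAt g (q s) s)
    (hq : ∀ s, C ≤ q s) (hat : a ≤ t) : g a + C * (t - a) ≤ g t := by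
  have := mul_sub_le_image_sub_of_le_deriv (fun s => (hg s).differentiableAt)
    (fun s => (hg s).deriv ▸ hq s) hat
  linarith

theorem image_le_add_mul_sub_add_sq_of_hasDerivAt_le (hφ : ∀ s, HasDerivAt φ (g s) s)
    (hg : ∀ s, HasDerivAt g (q s) s) (hq : ∀ s, q s ≤ C) (hat : a ≤ t) :
    φ t ≤ φ a + (t - a) * g a + C / 2 * (t - a) ^ 2 := by
  have hquad : ∀ s, HasDerivAt (fun s => (s - a) * g a + C / 2 * (s - a) ^ 2)
      (g a + C * (s - a)) s := fun s =>
    ((((hasDerivAt_id s).sub_const a).mul_const (g a)).add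
      ((((hasDerivAt_id s).sub_const a).pow 2).const_mul (C / 2))).congr_deriv (by simp; ring)
  have := sub_le_sub_of_hasDerivAt_le hat (fun s _ => hφ s) (fun s _ => hquad s)
    (fun s hs => image_le_add_mul_sub_of_hasDerivAt_le hg hq hs.1)
  simp only [sub_self, zero_mul, ne_eq, OfNat.ofNat_ne_zero, not_false_eq_true,
    zero_pow, mul_zero, add_zero, sub_zero] at this
  linarith

theorem add_mul_sq_div_one_add_le (hg : ∀ s, HasDerivAt g (q s) s) (hM : 0 ≤ M) (hr : 0 ≤ r)
    (henv : ∀ s, 0 ≤ s → r ^ 2 / (1 + M * s * r) ^ 2 ≤ q s) (ht : 0 ≤ t) :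
    g 0 + t * r ^ 2 / (1 + M * t * r) ≤ g t := by
  have := sub_le_sub_of_hasDerivAt_le ht
    (fun s hs => hasDerivAt_mul_sq_div_one_add M r s
      (by have := mul_nonneg (mul_nonneg hM hs.1) hr; positivity))
    (fun s _ => hg s) (fun s hs => henv s hs.1)
  simp only [zero_mul, zero_div, sub_zero] at this
  linarith

theorem le_add_mul_sq_div_one_sub (hg : ∀ s, HasDerivAt g (q s) s) (hM : 0 ≤ M) (hr : 0 ≤ r)
    (henv : ∀ s, 0 ≤ s → M * s * r < 1 → q s ≤ r ^ 2 / (1 - M * s * r) ^ 2) (ht : 0 ≤ t)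
    (htr : M * t * r < 1) : g t ≤ g 0 + t * r ^ 2 / (1 - M * t * r) := by
  have hlt : ∀ s ∈ Icc 0 t, M * s * r < 1 := fun s hs =>
    lt_of_le_of_lt (mul_le_mul_of_nonneg_right (mul_le_mul_of_nonneg_left hs.2 hM) hr) htr
  have := sub_le_sub_of_hasDerivAt_le ht (fun s _ => hg s)
    (fun s hs => hasDerivAt_mul_sq_div_one_sub M r s (by linarith [hlt s hs]))
    (fun s hs => henv s hs.1 (hlt s hs))
  simp only [zero_mul, zero_div, sub_zero] at this
  linarith

theorem le_add_mul_add_omegaStar (hφ : ∀ s, HasDerivAt φ (g s) s)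
    (hg : ∀ s, HasDerivAt g (q s) s) (hM : 0 < M) (hr : 0 ≤ r)
    (henv : ∀ s, 0 ≤ s → M * s * r < 1 → q s ≤ r ^ 2 / (1 - M * s * r) ^ 2) (ht : 0 ≤ t)
    (htr : M * t * r < 1) : φ t ≤ φ 0 + t * g 0 + omegaStar (M * t * r) / M ^ 2 := by
  have hlt : ∀ s ∈ Icc 0 t, M * s * r < 1 := fun s hs =>
    lt_of_le_of_lt (mul_le_mul_of_nonneg_right (mul_le_mul_of_nonneg_left hs.2 hM.le) hr) htr
  have hG : ∀ s ∈ Icc 0 t, HasDerivAt (fun s => s * g 0 + omegaStar (M * s * r) / M ^ 2)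
      (g 0 + s * r ^ 2 / (1 - M * s * r)) s := fun s hs =>
    (hasDerivAt_mul_const (g 0)).add (hasDerivAt_omegaStar_mul_div_sq hM.ne' (hlt s hs))
  have := sub_le_sub_of_hasDerivAt_le ht (fun s _ => hφ s) hG
    (fun s hs => le_add_mul_sq_div_one_sub hg hM.le hr henv hs.1 (hlt s hs))
  have homega0 : omegaStar 0 = 0 := by simp [omegaStar]
  simp only [zero_mul, mul_zero, homega0, zero_div, add_zero, sub_zero] at this
  linarith

theorem le_add_mul_add_omegaStar_add_sq (hφ : ∀ s, HasDerivAt φ (g s) s)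
    (hg : ∀ s, HasDerivAt g (q s) s) (hq : ∀ s, q s ≤ C) (hM : 0 < M) (hr : 0 ≤ r)
    (henv : ∀ s, 0 ≤ s → M * s * r < 1 → q s ≤ r ^ 2 / (1 - M * s * r) ^ 2) (ha : 0 ≤ a)
    (har : M * a * r < 1) (hat : a ≤ t) :
    φ t ≤ φ 0 + t * g 0 + omegaStar (M * a * r) / M ^ 2 +
      a * (t - a) * r ^ 2 / (1 - M * a * r) + C / 2 * (t - a) ^ 2 := by
  have hφa := le_add_mul_add_omegaStar hφ hg hM hr henv ha har
  have hga := le_add_mul_sq_div_one_sub hg hM.le hr henv ha har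
  have hquad := image_le_add_mul_sub_add_sq_of_hasDerivAt_le hφ hg hq hat
  have hprod := mul_le_mul_of_nonneg_left hga (sub_nonneg.2 hat)
  have : (t - a) * (a * r ^ 2 / (1 - M * a * r)) = a * (t - a) * r ^ 2 / (1 - M * a * r) := by
    ring
  linarith

end IntegratedBounds

theorem hasDerivAt_iteratedFDeriv_line {E F : Type*} [NormedAddCommGroup E] [NormedSpace ℝ E]
    [NormedAddCommGroup F] [NormedSpace ℝ F] {f : E → F} {m : WithTop ℕ∞} {k : ℕ}
    (hf : ContDiff ℝ m f) (hk : (k + 1 : ℕ) ≤ m) (x d : E) (t : ℝ) :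
    HasDerivAt (fun s : ℝ => iteratedFDeriv ℝ k f (x + s • d) fun _ => d)
      (iteratedFDeriv ℝ (k + 1) f (x + t • d) fun _ => d) t := by
  have hline : HasDerivAt (fun s : ℝ => x + s • d) d t := by
    simpa using ((hasDerivAt_id t).smul_const d).const_add x
  have hD : ContDiff ℝ 1 (iteratedFDeriv ℝ k f) :=
    hf.iteratedFDeriv_right (by rwa [add_comm] at hk)
  exact (ContinuousMultilinearMap.apply ℝ (fun _ : Fin k => E) F fun _ => d).hasFDerivAt
    |>.comp_hasDerivAt t (((hD.differentiable one_ne_zero) _).hasFDerivAt.comp_hasDerivAt t hline)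

section EuclideanSpace

variable {n : ℕ} {f : V n → ℝ} {μ L M : ℝ}

theorem dot_eq_inner (u v : V n) : dot u v = inner ℝ u v := by
  simp [dot, PiLp.inner_apply, mul_comm]

theorem dot_gradient (y d : V n) : dot (gradient f y) d = fderiv ℝ f y d := by
  rw [dot_eq_inner, gradient, InnerProductSpace.toDual_symm_apply]

theorem hessQ_eq (y d : V n) : hessQ f y d = iteratedFDeriv ℝ 2 f y fun _ => d := by
  rw [hessQ]
  congr 1
  ext i
  fin_cases i <;> rfl

theorem iteratedFDeriv_three_vecCons (y d : V n) :
    iteratedFDeriv ℝ 3 f y ![d, d, d] = iteratedFDeriv ℝ 3 f y fun _ => d := by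
  congr 1
  ext i
  fin_cases i <;> rfl

theorem hasDerivAt_comp_line (hf : ContDiff ℝ 1 f) (x d : V n) (t : ℝ) :
    HasDerivAt (fun s : ℝ => f (x + s • d)) (dot (gradient f (x + t • d)) d) t := by
  have h : HasDerivAt (fun s : ℝ => f (x + s • d)) (iteratedFDeriv ℝ 1 f (x + t • d) fun _ => d)
      t := by
    simpa only [iteratedFDeriv_zero_apply] using
      hasDerivAt_iteratedFDeriv_line hf le_rfl x d t (k := 0)
  rwa [iteratedFDeriv_one_apply, ← dot_gradient] at h

theorem hasDerivAt_dot_gradient_line (hf : ContDiff ℝ 2 f) (x d : V n) (t : ℝ) :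
    HasDerivAt (fun s : ℝ => dot (gradient f (x + s • d)) d) (hessQ f (x + t • d) d) t := by
  have := hasDerivAt_iteratedFDeriv_line hf le_rfl x d t (k := 1)
  simpa only [iteratedFDeriv_one_apply, dot_gradient, hessQ_eq] using this

theorem hasDerivAt_hessQ_line (hf : ContDiff ℝ 3 f) (x d : V n) (t : ℝ) :
    HasDerivAt (fun s : ℝ => hessQ f (x + s • d) d)
      (iteratedFDeriv ℝ 3 f (x + t • d) ![d, d, d]) t := by
  have := hasDerivAt_iteratedFDeriv_line hf le_rfl x d t (k := 2)
  simpa only [hessQ_eq, iteratedFDeriv_three_vecCons] using this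

theorem StrongConvex.strongConvexOn_line (hsc : StrongConvex μ f) (x d : V n) :
    StrongConvexOn univ (μ * ‖d‖ ^ 2) fun s : ℝ => f (x + s • d) := by
  refine ⟨convex_univ, fun a _ b _ α β hα hβ hαβ => ?_⟩
  obtain rfl : β = 1 - α := by linarith
  have hpt : x + (α • a + (1 - α) • b) • d = α • (x + a • d) + (1 - α) • (x + b • d) := by
    simp only [smul_eq_mul, add_smul, smul_add, smul_smul]
    module
  have hdist : ‖(x + a • d) - (x + b • d)‖ = ‖a - b‖ * ‖d‖ := by
    rw [add_sub_add_left_eq_sub, ← sub_smul, norm_smul]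
  have := hsc (x + a • d) (x + b • d) α hα (by linarith)
  rw [← hpt, hdist] at this
  simp only [smul_eq_mul] at this ⊢
  linarith

theorem StrongConvex.mul_sq_norm_le_hessQ (hf : ContDiff ℝ 2 f) (hsc : StrongConvex μ f)
    (y d : V n) : μ * ‖d‖ ^ 2 ≤ hessQ f y d := by
  simpa using (hsc.strongConvexOn_line y d).le_of_hasDerivAt
    (hasDerivAt_comp_line (hf.of_le (by norm_num)) y d) (hasDerivAt_dot_gradient_line hf y d) 0

theorem LipschitzGrad.hessQ_le (hf : ContDiff ℝ 2 f) (hL : 0 ≤ L) (hgrad : LipschitzGrad L f)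
    (y d : V n) : hessQ f y d ≤ L * ‖d‖ ^ 2 := by
  have hlip : ∀ s : ℝ, ‖dot (gradient f (y + s • d)) d - dot (gradient f (y + (0 : ℝ) • d)) d‖
      ≤ L * ‖d‖ ^ 2 * ‖s - 0‖ := fun s => by
    rw [dot_eq_inner, dot_eq_inner, ← inner_sub_left, Real.norm_eq_abs]
    calc _ ≤ ‖gradient f (y + s • d) - gradient f (y + (0 : ℝ) • d)‖ * ‖d‖ :=
          abs_real_inner_le_norm _ _
      _ ≤ L * ‖(y + s • d) - (y + (0 : ℝ) • d)‖ * ‖d‖ := by gcongr; exact hgrad _ _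
      _ = L * ‖d‖ ^ 2 * ‖s - 0‖ := by
        rw [add_sub_add_left_eq_sub, ← sub_smul, norm_smul]; ring
  have := (hasDerivAt_dot_gradient_line hf y d 0).le_of_lip' (by positivity)
    (Filter.Eventually.of_forall hlip)
  simpa using (le_abs_self _).trans this

theorem StrongConvex.sqrt_mul_norm_le_wnorm (hf : ContDiff ℝ 2 f) (hμ : 0 ≤ μ)
    (hsc : StrongConvex μ f) (x d : V n) : √μ * ‖d‖ ≤ wnorm f x d := by
  rw [wnorm, ← Real.sqrt_sq (norm_nonneg d), ← Real.sqrt_mul hμ]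
  exact Real.sqrt_le_sqrt (hsc.mul_sq_norm_le_hessQ hf x d)

theorem LipschitzGrad.wnorm_le_sqrt_mul_norm (hf : ContDiff ℝ 2 f) (hL : 0 ≤ L)
    (hgrad : LipschitzGrad L f) (x d : V n) : wnorm f x d ≤ √L * ‖d‖ := by
  rw [wnorm, ← Real.sqrt_sq (norm_nonneg d), ← Real.sqrt_mul hL]
  exact Real.sqrt_le_sqrt (hgrad.hessQ_le hf hL x d)

theorem SelfConcordant.abs_inv_sqrt_hessQ_sub_le (hf : ContDiff ℝ 3 f)
    (hself : SelfConcordant M f) {d : V n} (hpos : ∀ y, 0 < hessQ f y d) (x : V n) {t : ℝ}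
    (ht : 0 ≤ t) : |(√(hessQ f (x + t • d) d))⁻¹ - (wnorm f x d)⁻¹| ≤ M * t := by
  simpa [wnorm, abs_of_nonneg ht] using abs_inv_sqrt_sub_le_of_selfConcordant
    (hasDerivAt_hessQ_line hf x d) (fun _ => hpos _) (fun s => hself (x + s • d) d) 0 t

theorem StrongConvex.hessQ_pos (hf : ContDiff ℝ 2 f) (hμ : 0 < μ) (hsc : StrongConvex μ f)
    {d : V n} (hd : d ≠ 0) (y : V n) : 0 < hessQ f y d :=
  lt_of_lt_of_le (by have := norm_pos_iff.2 hd; positivity) (hsc.mul_sq_norm_le_hessQ hf y d)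

theorem SelfConcordant.sq_div_one_add_sq_le_hessQ (hf : ContDiff ℝ 3 f)
    (hself : SelfConcordant M f) {d : V n} (hpos : ∀ y, 0 < hessQ f y d) (x : V n) {t : ℝ}
    (ht : 0 ≤ t) :
    wnorm f x d ^ 2 / (1 + M * t * wnorm f x d) ^ 2 ≤ hessQ f (x + t • d) d :=
  sq_div_one_add_sq_le_of_abs_inv_sqrt_sub_le (hpos _) (Real.sqrt_pos.2 (hpos x))
    (hself.abs_inv_sqrt_hessQ_sub_le hf hpos x ht)

theorem SelfConcordant.hessQ_le_sq_div_one_sub_sq (hf : ContDiff ℝ 3 f)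
    (hself : SelfConcordant M f) {d : V n} (hpos : ∀ y, 0 < hessQ f y d) (x : V n) {t : ℝ}
    (ht : 0 ≤ t) (htr : M * t * wnorm f x d < 1) :
    hessQ f (x + t • d) d ≤ wnorm f x d ^ 2 / (1 - M * t * wnorm f x d) ^ 2 :=
  le_sq_div_one_sub_sq_of_abs_inv_sqrt_sub_le (hpos _) (Real.sqrt_pos.2 (hpos x))
    (hself.abs_inv_sqrt_hessQ_sub_le hf hpos x ht) htr

end EuclideanSpace

theorem stmt14 {n : ℕ} (f : V n → ℝ) (μ L M : ℝ) (hμ : 0 < μ) (hL : 0 < L) (hM : 0 < M)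
    (hf : ContDiff ℝ 3 f) (hsc : StrongConvex μ f) (hgrad : LipschitzGrad L f)
    (hself : SelfConcordant M f)
    (x d : V n) (hd : d ≠ 0)
    (tl : ℝ) (htl : tl = 1 / (M * wnorm f x d) * (wnorm f x d / (Real.sqrt μ * ‖d‖) - 1))
    (tu : ℝ) (htu : tu = 1 / (M * wnorm f x d) * (1 - wnorm f x d / (Real.sqrt L * ‖d‖)))
    (t : ℝ) (ht : 0 ≤ t) :
    ((t ≤ tl →
        dot (gradient f (x + t • d)) d ≥
          dot (gradient f x) d + t * wnorm f x d ^ 2 / (1 + M * t * wnorm f x d)) ∧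
      (tl < t →
        dot (gradient f (x + t • d)) d ≥
          dot (gradient f x) d + tl * wnorm f x d ^ 2 / (1 + M * tl * wnorm f x d) +
            μ * (t - tl) * ‖d‖ ^ 2)) ∧
    ((t ≤ tu →
        dot (gradient f (x + t • d)) d ≤
          dot (gradient f x) d + t * wnorm f x d ^ 2 / (1 - M * t * wnorm f x d)) ∧
      (tu < t →
        dot (gradient f (x + t • d)) d ≤
          dot (gradient f x) d + tu * wnorm f x d ^ 2 / (1 - M * tu * wnorm f x d) +
            L * (t - tu) * ‖d‖ ^ 2)) ∧
    ((t ≤ tu →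
        f (x + t • d) ≤
          f x + t * dot (gradient f x) d + omegaStar (M * t * wnorm f x d) / M ^ 2) ∧
      (tu < t →
        f (x + t • d) ≤
          f x + t * dot (gradient f x) d + omegaStar (M * tu * wnorm f x d) / M ^ 2 +
            tu * (t - tu) * wnorm f x d ^ 2 / (1 - M * tu * wnorm f x d) +
            L / 2 * (t - tu) ^ 2 * ‖d‖ ^ 2)) := by
  have hf2 : ContDiff ℝ 2 f := hf.of_le (by norm_num)
  have hφ := hasDerivAt_comp_line (hf.of_le (by norm_num)) x d
  have hg := hasDerivAt_dot_gradient_line hf2 x d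
  have hpos := hsc.hessQ_pos hf2 hμ hd
  have hlow := fun s : ℝ => hsc.mul_sq_norm_le_hessQ hf2 (x + s • d) d
  have hupp := fun s : ℝ => hgrad.hessQ_le hf2 hL.le (x + s • d) d
  set r := wnorm f x d
  have hr : 0 < r := Real.sqrt_pos.2 (hpos x)
  have henvL := fun s (hs : 0 ≤ s) => hself.sq_div_one_add_sq_le_hessQ hf hpos x hs
  have henvU := fun s (hs : 0 ≤ s) => hself.hessQ_le_sq_div_one_sub_sq hf hpos x hs
  have htl0 : 0 ≤ tl := htl ▸ mul_nonneg (by positivity)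
    (sub_nonneg.2 ((one_le_div (by positivity)).2 (hsc.sqrt_mul_norm_le_wnorm hf2 hμ.le x d)))
  have htu0 : 0 ≤ tu := htu ▸ mul_nonneg (by positivity)
    (sub_nonneg.2 ((div_le_one (by positivity)).2 (hgrad.wnorm_le_sqrt_mul_norm hf2 hL.le x d)))
  have hMtu : M * tu * r < 1 := by
    have : M * tu * r = 1 - r / (√L * ‖d‖) := by rw [htu]; field_simp
    linarith [div_pos hr (by positivity : 0 < √L * ‖d‖)]
  have hMt : t ≤ tu → M * t * r < 1 := fun h => lt_of_le_of_lt (by gcongr) hMtu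
  have hgL := fun s (hs : 0 ≤ s) => add_mul_sq_div_one_add_le hg hM.le hr.le henvL hs
  have hgU := fun s (hs : 0 ≤ s) => le_add_mul_sq_div_one_sub hg hM.le hr.le henvU hs
  have hφU := fun s (hs : 0 ≤ s) => le_add_mul_add_omegaStar hφ hg hM hr.le henvU hs
  have hφU' := fun s (hs : tu ≤ s) => le_add_mul_add_omegaStar_add_sq hφ hg hupp hM hr.le henvU
    htu0 hMtu hs
  simp only [zero_smul, add_zero] at hgL hgU hφU hφU'
  refine ⟨⟨fun _ => ?_, fun h => ?_⟩, ⟨fun h => ?_, fun h => ?_⟩, fun h => ?_, fun h => ?_⟩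
  · exact hgL t ht
  · linarith [hgL tl htl0, add_mul_sub_le_image_of_le_hasDerivAt hg hlow h.le]
  · exact hgU t ht (hMt h)
  · linarith [hgU tu htu0 hMtu, image_le_add_mul_sub_of_hasDerivAt_le hg hupp h.le]
  · exact hφU t ht (hMt h)
  · linarith [hφU' t h.le]
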